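/- arXiv:1703.02407 — 3 statements merged into one kernel-verified Lean document; each statement's English description precedes it below -/
import Mathlib

section
/- Let R = 5.573412. For every real x ≥ 851, ∫₃ˣ (8/(π√R))^{1/2} (log t)^{-7/4} e^{-√(log t / R)} dt ≤ (2/(π√R))^{1/2} · x · (log x)^{-3/4} · e^{-√(log x / R)}. -/
/-!
Write `w(u) = u^(-7/4) e^(-√(u/R))` and `M(x) = x (log x)^(-3/4) e^(-√(log x / R))`. Since
`√(8/(π√R)) = 2 √(2/(π√R))`, the claim is `2 ∫₃ˣ w(log t) dt ≤ M(x)`. Differentiating,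
`M'(t) = (log t - 3/4 - √(log t / R)/2) · w(log t)`, and for `R ≥ 1`, `log t ≥ 4` the bracket is at
least `2`, so `2 ∫_{851}^x w(log t) dt ≤ M(x) - M(851)`. It remains to see numerically that
`2 ∫₃^{851} w(log t) dt ≤ M(851)`: as `w` is decreasing, a six-step upper Riemann sum gives
`∫₃^{851} w(log t) dt ≤ 26`, while `M(851) ≥ 52`.
-/

open Real Set intervalIntegral

noncomputable def logWeight (R u : ℝ) : ℝ :=
  u ^ (-(7:ℝ)/4) * exp (-√(u / R))

noncomputable def majorant (R x : ℝ) : ℝ :=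
  x * log x ^ (-(3:ℝ)/4) * exp (-√(log x / R))

lemma exp_natCast_le_of_pow_le {k : ℕ} {a : ℝ} (h : 2.7182818286 ^ k ≤ a) : exp k ≤ a := by
  rw [← exp_one_pow]
  exact (pow_le_pow_left₀ (exp_pos 1).le exp_one_lt_d9.le k).trans h

lemma log_le_natCast_of_le_pow {k : ℕ} {x : ℝ} (hx : 0 < x) (h : x ≤ 2.7182818283 ^ k) :
    log x ≤ k := by
  rw [log_le_iff_le_exp hx, ← exp_one_pow]
  exact h.trans (pow_le_pow_left₀ (by norm_num) exp_one_gt_d9.le k)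

lemma rpow_neg_div_pow {u : ℝ} (hu : 0 < u) (m : ℕ) {n : ℕ} (hn : n ≠ 0) :
    (u ^ (-(m:ℝ)/n)) ^ n = (u ^ m)⁻¹ := by
  rw [← rpow_natCast, ← rpow_mul hu.le, div_mul_cancel₀ _ (by exact_mod_cast hn), rpow_neg hu.le,
    rpow_natCast]

lemma rpow_neg_div_le_iff {u a : ℝ} (hu : 0 < u) (ha : 0 ≤ a) (m : ℕ) {n : ℕ} (hn : n ≠ 0) :
    u ^ (-(m:ℝ)/n) ≤ a ↔ 1 ≤ a ^ n * u ^ m := by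
  rw [← pow_le_pow_iff_left₀ (by positivity) ha hn, rpow_neg_div_pow hu m hn,
    inv_le_iff_one_le_mul₀ (by positivity)]

lemma le_rpow_neg_div_iff {u a : ℝ} (hu : 0 < u) (ha : 0 ≤ a) (m : ℕ) {n : ℕ} (hn : n ≠ 0) :
    a ≤ u ^ (-(m:ℝ)/n) ↔ a ^ n * u ^ m ≤ 1 := by
  rw [← pow_le_pow_iff_left₀ ha (by positivity) hn, rpow_neg_div_pow hu m hn,
    ← one_div, le_div_iff₀ (by positivity)]

lemma logWeight_le_logWeight {R u v : ℝ} (hR : 0 ≤ R) (hu : 0 < u) (huv : u ≤ v) :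
    logWeight R v ≤ logWeight R u := by
  unfold logWeight
  refine mul_le_mul (rpow_le_rpow_of_nonpos hu huv (by norm_num)) ?_ (exp_pos _).le
    (rpow_nonneg hu.le _)
  exact exp_le_exp.2 (neg_le_neg (Real.sqrt_le_sqrt (div_le_div_of_nonneg_right huv hR)))

lemma logWeight_le {R u c s : ℝ} (hR : 0 < R) (hu : 0 < u) (hc : 0 ≤ c)
    (hcu : 1 ≤ c ^ 4 * u ^ 7) (hs : 0 ≤ s) (hsu : s ^ 2 * R ≤ u) :
    logWeight R u ≤ c / (1 + s + s ^ 2 / 2) := by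
  have hpow : u ^ (-(7:ℝ)/4) ≤ c := by
    have := (rpow_neg_div_le_iff hu hc 7 (n := 4) (by norm_num)).2 (by exact_mod_cast hcu)
    exact_mod_cast this
  have hsqrt : s ≤ √(u / R) := Real.le_sqrt_of_sq_le ((le_div_iff₀ hR).2 hsu)
  have hexp : exp (-√(u / R)) ≤ 1 / (1 + s + s ^ 2 / 2) := by
    rw [exp_neg, ← one_div]
    gcongr
    exact (quadratic_le_exp_of_nonneg hs).trans (exp_le_exp.2 hsqrt)
  calc logWeight R u ≤ c * (1 / (1 + s + s ^ 2 / 2)) :=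
        mul_le_mul hpow hexp (exp_pos _).le hc
    _ = c / (1 + s + s ^ 2 / 2) := mul_one_div c _

lemma continuousOn_logWeight_log (R : ℝ) : ContinuousOn (fun t => logWeight R (log t)) (Ioi 1) := by
  intro t ht
  have hlog : ContinuousAt log t := continuousAt_log (by linarith [mem_Ioi.1 ht])
  exact ((hlog.rpow_const (Or.inl (log_pos ht).ne')).mul
    ((hlog.div_const R).sqrt.neg.rexp)).continuousWithinAt

lemma intervalIntegrable_logWeight_log (R : ℝ) {a b : ℝ} (ha : 1 < a) (hb : 1 < b) :
    IntervalIntegrable (fun t => logWeight R (log t)) MeasureTheory.volume a b :=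
  ((continuousOn_logWeight_log R).mono fun _ ht =>
    (lt_inf_iff.2 ⟨ha, hb⟩).trans_le ht.1).intervalIntegrable

lemma integral_logWeight_log_le {R u a b : ℝ} (hR : 0 ≤ R) (hu : 0 < u) (hua : exp u ≤ a)
    (hab : a ≤ b) : ∫ t in a..b, logWeight R (log t) ≤ (b - a) * logWeight R u := by
  have ha : 1 < a := (one_lt_exp_iff.2 hu).trans_le hua
  calc ∫ t in a..b, logWeight R (log t) ≤ ∫ _ in a..b, logWeight R u :=
        integral_mono_on hab (intervalIntegrable_logWeight_log R ha (ha.trans_le hab))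
          intervalIntegrable_const fun t ht => logWeight_le_logWeight hR hu
            ((le_log_iff_exp_le (by linarith [ht.1])).2 (hua.trans ht.1))
    _ = (b - a) * logWeight R u := by rw [integral_const, smul_eq_mul]

lemma hasDerivAt_majorant {R t : ℝ} (hR : 0 < R) (ht : 1 < t) :
    HasDerivAt (majorant R) ((log t - 3/4 - √(log t / R) / 2) * logWeight R (log t)) t := by
  have hL : 0 < log t := log_pos ht
  have hlog : HasDerivAt log t⁻¹ t := hasDerivAt_log (by linarith)
  have hpow : HasDerivAt (fun y => log y ^ (-(3:ℝ)/4))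
      (t⁻¹ * (-(3:ℝ)/4) * log t ^ (-(7:ℝ)/4)) t := by
    convert hlog.rpow_const (p := -(3:ℝ)/4) (Or.inl hL.ne') using 2; norm_num
  have hexp : HasDerivAt (fun y => exp (-√(log y / R)))
      (exp (-√(log t / R)) * -(t⁻¹ / R / (2 * √(log t / R)))) t :=
    ((hlog.div_const R).sqrt (div_pos hL hR).ne').neg.exp
  have hprod : HasDerivAt (fun y => y * log y ^ (-(3:ℝ)/4) * exp (-√(log y / R)))
      ((1 * log t ^ (-(3:ℝ)/4) + t * (t⁻¹ * (-(3:ℝ)/4) * log t ^ (-(7:ℝ)/4))) *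
        exp (-√(log t / R)) +
        t * log t ^ (-(3:ℝ)/4) * (exp (-√(log t / R)) * -(t⁻¹ / R / (2 * √(log t / R))))) t :=
    ((hasDerivAt_id' t).mul hpow).mul hexp
  refine hprod.congr_deriv ?_
  have h34 : log t ^ (-(3:ℝ)/4) = log t * log t ^ (-(7:ℝ)/4) := by
    rw [← rpow_one_add' hL.le (by norm_num)]; norm_num
  -- the chain rule for `s = √(log t / R)` produces `1 / (R s)`, which is `s / log t` as `s² = log t / R`
  have hchain : t⁻¹ / R / (2 * √(log t / R)) = √(log t / R) / (2 * log t * t) := by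
    field_simp
    rw [sq_sqrt (div_pos hL hR).le]
    field_simp
  rw [h34, hchain, logWeight]
  generalize exp (-√(log t / R)) = E
  field_simp
  ring

lemma two_mul_integral_logWeight_log_le {R a b : ℝ} (hR : 1 ≤ R) (ha : exp 4 ≤ a) (hab : a ≤ b) :
    2 * ∫ t in a..b, logWeight R (log t) ≤ majorant R b - majorant R a := by
  have ha1 : 1 < a := (one_lt_exp_iff.2 (by norm_num)).trans_le ha
  have hlog : ∀ t ∈ Icc a b, 4 ≤ log t := fun t ht =>
    (le_log_iff_exp_le (by linarith [ht.1])).2 (ha.trans ht.1)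
  have hderiv : ∀ t ∈ Icc a b, HasDerivAt (majorant R)
      ((log t - 3/4 - √(log t / R) / 2) * logWeight R (log t)) t := fun t ht =>
    hasDerivAt_majorant (by linarith) (ha1.trans_le ht.1)
  rw [← integral_const_mul]
  refine integral_le_sub_of_hasDeriv_right_of_le hab
    (fun t ht => (hderiv t ht).continuousAt.continuousWithinAt)
    (fun t ht => (hderiv t (Ioo_subset_Icc_self ht)).hasDerivWithinAt)
    (continuousOn_const.mul ((continuousOn_logWeight_log R).mono
      fun t ht => ha1.trans_le ht.1)).integrableOn_Icc fun t ht => ?_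
  have hL := hlog t (Ioo_subset_Icc_self ht)
  have hs : √(log t / R) ≤ log t / 2 := by
    rw [Real.sqrt_le_left (by linarith)]
    calc log t / R ≤ log t := div_le_self (by linarith) hR
      _ ≤ (log t / 2) ^ 2 := by nlinarith
  have hw : 0 ≤ logWeight R (log t) := by unfold logWeight; positivity
  exact mul_le_mul_of_nonneg_right (by linarith) hw

lemma le_majorant {R x L b s : ℝ} (hR : 0 < R) (hx : 1 < x) (hL : log x ≤ L) (hb : 0 ≤ b)
    (hbL : b ^ 4 * L ^ 3 ≤ 1) (hs : 0 ≤ s) (hs16 : s ≤ 16) (hsL : L ≤ s ^ 2 * R) :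
    x * b * (1 - s / 16) ^ 16 ≤ majorant R x := by
  have hlog : 0 < log x := log_pos hx
  have hpow : b ≤ log x ^ (-(3:ℝ)/4) := by
    have := (le_rpow_neg_div_iff hlog hb 3 (n := 4) (by norm_num)).2
      ((mul_le_mul_of_nonneg_left (pow_le_pow_left₀ hlog.le hL 3) (by positivity)).trans hbL)
    exact_mod_cast this
  have hsqrt : √(log x / R) ≤ s := by
    rw [Real.sqrt_le_left hs, div_le_iff₀ hR]
    linarith
  have hexp : (1 - s / 16) ^ 16 ≤ exp (-√(log x / R)) :=
    (one_sub_div_pow_le_exp_neg (n := 16) (by exact_mod_cast hs16)).trans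
      (exp_le_exp.2 (neg_le_neg hsqrt))
  unfold majorant
  gcongr

-- The partition points are ⌈e^k⌉ for k = 1, …, 6, so that log t ≥ k on the k-th piece.
lemma integral_logWeight_log_three_851_le :
    ∫ t in (3:ℝ)..851, logWeight 5.573412 (log t) ≤ 26 := by
  have piece : ∀ (k : ℕ) (a b c s : ℝ), 0 < k ∧ 2.7182818286 ^ k ≤ a ∧ a ≤ b ∧ 0 ≤ c ∧
      1 ≤ c ^ 4 * (k:ℝ) ^ 7 ∧ 0 ≤ s ∧ s ^ 2 * 5.573412 ≤ k →
      ∫ t in a..b, logWeight 5.573412 (log t) ≤ (b - a) * (c / (1 + s + s ^ 2 / 2)) := by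
    rintro k a b c s ⟨hk, hka, hab, hc, hck, hs, hsk⟩
    replace hk : (0:ℝ) < k := by exact_mod_cast hk
    exact (integral_logWeight_log_le (by norm_num) hk (exp_natCast_le_of_pow_le hka) hab).trans
      (mul_le_mul_of_nonneg_left (logWeight_le (by norm_num) hk hc hck hs hsk) (by linarith))
  have split : ∀ a b : ℝ, 1 < a → 1 < b → ∫ t in a..851, logWeight 5.573412 (log t) =
      (∫ t in a..b, logWeight 5.573412 (log t)) + ∫ t in b..851, logWeight 5.573412 (log t) :=
    fun a b ha hb => (integral_add_adjacent_intervals (intervalIntegrable_logWeight_log _ ha hb)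
      (intervalIntegrable_logWeight_log _ hb (by norm_num))).symm
  rw [split 3 8 (by norm_num) (by norm_num), split 8 21 (by norm_num) (by norm_num),
    split 21 55 (by norm_num) (by norm_num), split 55 149 (by norm_num) (by norm_num),
    split 149 404 (by norm_num) (by norm_num)]
  have h1 := piece 1 3 8 1 (21/50) (by norm_num)
  have h2 := piece 2 8 21 (149/500) (59/100) (by norm_num)
  have h3 := piece 3 21 55 (147/1000) (73/100) (by norm_num)
  have h4 := piece 4 55 149 (89/1000) (21/25) (by norm_num)
  have h5 := piece 5 149 404 (3/50) (47/50) (by norm_num)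
  have h6 := piece 6 404 851 (11/250) (103/100) (by norm_num)
  norm_num at h1 h2 h3 h4 h5 h6
  linarith

lemma fiftytwo_le_majorant_851 : 52 ≤ majorant 5.573412 851 := by
  have hlog : log 851 ≤ 7 := by
    exact_mod_cast log_le_natCast_of_le_pow (k := 7) (by norm_num) (by norm_num)
  have h := le_majorant (R := 5.573412) (b := 29/125) (s := 113/100) (by norm_num) (by norm_num)
    hlog (by norm_num) (by norm_num) (by norm_num) (by norm_num) (by norm_num)
  norm_num at h
  linarith

theorem integral_an_bound (x : ℝ) (hx : 851 ≤ x) :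
    (∫ t in (3:ℝ)..x,
        Real.sqrt (8 / (Real.pi * Real.sqrt 5.573412)) *
          (Real.log t) ^ (-(7:ℝ)/4) * Real.exp (-Real.sqrt (Real.log t / 5.573412))) ≤
      Real.sqrt (2 / (Real.pi * Real.sqrt 5.573412)) * x *
        (Real.log x) ^ (-(3:ℝ)/4) * Real.exp (-Real.sqrt (Real.log x / 5.573412)) := by
  set c := √(2 / (π * √5.573412))
  have hc : √(8 / (π * √5.573412)) = 2 * c := by
    rw [show (8:ℝ) / (π * √5.573412) = 2 ^ 2 * (2 / (π * √5.573412)) by ring,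
      Real.sqrt_mul (by norm_num), Real.sqrt_sq (by norm_num)]
  have htail := two_mul_integral_logWeight_log_le (R := 5.573412) (by norm_num)
    (exp_natCast_le_of_pow_le (k := 4) (by norm_num)) hx
  have hsplit := integral_add_adjacent_intervals
    (intervalIntegrable_logWeight_log 5.573412 (a := 3) (b := 851) (by norm_num) (by norm_num))
    (intervalIntegrable_logWeight_log 5.573412 (b := x) (by norm_num) (by linarith))
  have key : 2 * ∫ t in (3:ℝ)..x, logWeight 5.573412 (log t) ≤ majorant 5.573412 x := by
    linarith [integral_logWeight_log_three_851_le, fiftytwo_le_majorant_851]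
  calc _ = c * (2 * ∫ t in (3:ℝ)..x, logWeight 5.573412 (log t)) := by
        rw [← integral_const_mul, ← integral_const_mul, hc]
        congr 1 with t
        rw [logWeight]
        ring
    _ ≤ c * majorant 5.573412 x := by gcongr
    _ = _ := by rw [majorant]; ring
end

section
/- Let n be a positive integer and x ≥ 27 a real number such that x/log^{n+2} x ≥ (1/(n+1)!) · ∑_{k=1}^{n+1} 2(k−1)!/log^k 2. Then li(x) ≥ ∑_{k=1}^{n+1} (k−1)! · x / log^k x. -/
noncomputable def li (x : ℝ) : ℝ :=
  Filter.limUnder (nhdsWithin (0:ℝ) (Set.Ioi 0))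
    (fun ε => (∫ t in (0:ℝ)..(1 - ε), 1 / Real.log t) + ∫ t in (1 + ε)..x, 1 / Real.log t)

/-!
Substituting `t = 1 ∓ u` in the principal value gives
`li x = ∫₀¹ (1 / log (1 + u) + 1 / log (1 - u)) du + ∫₂ˣ dt / log t`,
and the first integrand lies in `[0, 2]`, so `li x ≥ ∫₂ˣ dt / log t`.
Integrating by parts `n + 1` times,
`∫₂ˣ dt / log t = S(x) - S(2) + (n + 1)! ∫₂ˣ dt / log^(n+2) t`,
where `S` is the partial sum of the asymptotic expansion of `li`.
For `m ≥ 3` and `x ≥ 27` one has `∫₂ˣ dt / log^m t ≥ x / log^m x`: on `[27, x]` because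
`t / log^m t` has derivative at most `1 / log^m t`, and on `[2, 27]` by a numerical lower bound
for the integral over `[2, 2.7]`. The hypothesis on `x` says precisely that the remainder
`(n + 1)! x / log^(n+2) x` then dominates `S(2)`.
-/
open Real MeasureTheory intervalIntegral Filter Set
open scoped Nat Topology

lemma continuousOn_inv_log_pow (m : ℕ) : ContinuousOn (fun t : ℝ => 1 / log t ^ m) (Ioi 1) :=
  continuousOn_const.div ((continuousOn_log.mono fun t (ht : 1 < t) => by simp; linarith).pow m)
    fun t ht => pow_ne_zero m (log_pos ht).ne'

lemma intervalIntegrable_inv_log_pow (m : ℕ) {a b : ℝ} (ha : 1 < a) (hb : 1 < b) :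
    IntervalIntegrable (fun t => 1 / log t ^ m) volume a b :=
  ((continuousOn_inv_log_pow m).mono fun _ ht => (lt_min ha hb).trans_le ht.1).intervalIntegrable

lemma intervalIntegrable_inv_log {a b : ℝ} (ha : 1 < a) (hb : 1 < b) :
    IntervalIntegrable (fun t => 1 / log t) volume a b := by
  simpa using intervalIntegrable_inv_log_pow 1 ha hb

lemma hasDerivAt_div_log_pow (m : ℕ) {t : ℝ} (ht : 1 < t) :
    HasDerivAt (fun s => s / log s ^ m) (1 / log t ^ m - m / log t ^ (m + 1)) t := by
  have hL : log t ≠ 0 := (log_pos ht).ne'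
  have ht0 : t ≠ 0 := by positivity
  refine ((hasDerivAt_id' t).fun_div ((hasDerivAt_log ht0).fun_pow m)
    (pow_ne_zero m hL)).congr_deriv ?_
  rcases m with _ | m
  · simp
  · rw [Nat.add_sub_cancel]
    field_simp
    ring

noncomputable def liAsymptoticSum (n : ℕ) (x : ℝ) : ℝ :=
  ∑ k ∈ Finset.Icc 1 n, ((k - 1)! : ℝ) * x / log x ^ k

lemma sum_factorial_mul_inv_pow_sub (n : ℕ) {L : ℝ} (hL : L ≠ 0) :
    ∑ k ∈ Finset.Icc 1 n, ((k - 1)! : ℝ) * (1 / L ^ k - k / L ^ (k + 1)) =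
      1 / L - n ! / L ^ (n + 1) := by
  induction n with
  | zero => simp
  | succ n ih =>
    rw [Finset.sum_Icc_succ_top (by omega), ih, Nat.add_sub_cancel, Nat.factorial_succ]
    field_simp
    push_cast
    ring

lemma hasDerivAt_liAsymptoticSum (n : ℕ) {t : ℝ} (ht : 1 < t) :
    HasDerivAt (liAsymptoticSum n) (1 / log t - n ! / log t ^ (n + 1)) t := by
  rw [← sum_factorial_mul_inv_pow_sub n (log_pos ht).ne']
  unfold liAsymptoticSum
  simp_rw [mul_div_assoc]
  exact HasDerivAt.fun_sum fun k _ => (hasDerivAt_div_log_pow k ht).const_mul ((k - 1)! : ℝ)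

theorem integral_inv_log_eq (n : ℕ) {a b : ℝ} (ha : 1 < a) (hb : 1 < b) :
    ∫ t in a..b, 1 / log t =
      liAsymptoticSum n b - liAsymptoticSum n a + n ! * ∫ t in a..b, 1 / log t ^ (n + 1) := by
  have hint := (intervalIntegrable_inv_log_pow (n + 1) ha hb).const_mul (n ! : ℝ)
  simp only [mul_one_div] at hint
  have hFTC := integral_eq_sub_of_hasDerivAt
    (fun t ht => hasDerivAt_liAsymptoticSum n ((lt_min ha hb).trans_le ht.1))
    ((intervalIntegrable_inv_log ha hb).sub hint)
  simp only [← mul_one_div (n ! : ℝ)] at hFTC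
  rw [integral_sub (intervalIntegrable_inv_log ha hb) (by simpa only [mul_one_div] using hint),
    intervalIntegral.integral_const_mul] at hFTC
  linarith

lemma sub_le_integral_inv_log_pow (m : ℕ) {a b : ℝ} (ha : 1 < a) (hab : a ≤ b) :
    b / log b ^ m - a / log a ^ m ≤ ∫ t in a..b, 1 / log t ^ m := by
  have hb := ha.trans_le hab
  have hint := (intervalIntegrable_inv_log_pow (m + 1) ha hb).const_mul (m : ℝ)
  simp only [mul_one_div] at hint
  rw [← integral_eq_sub_of_hasDerivAt
    (fun t ht => hasDerivAt_div_log_pow m ((lt_min ha hb).trans_le ht.1))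
    ((intervalIntegrable_inv_log_pow m ha hb).sub hint)]
  refine integral_mono_on hab ((intervalIntegrable_inv_log_pow m ha hb).sub hint)
    (intervalIntegrable_inv_log_pow m ha hb) fun t ht => ?_
  have := log_pos (ha.trans_le ht.1)
  exact sub_le_self _ (by positivity)

lemma div_pow_le_integral_inv_log_pow (m : ℕ) {a b c : ℝ} (ha : 1 < a) (hab : a ≤ b)
    (hc : log b ≤ c) : (b - a) / c ^ m ≤ ∫ t in a..b, 1 / log t ^ m := by
  have hmono : ∀ t ∈ Icc a b, 1 / c ^ m ≤ 1 / log t ^ m := fun t ht => by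
    have hlog := log_pos (ha.trans_le ht.1)
    gcongr
    exact (log_le_log (by linarith [ht.1]) ht.2).trans hc
  have := integral_mono_on hab intervalIntegrable_const
    (intervalIntegrable_inv_log_pow m ha (ha.trans_le hab)) hmono
  rwa [intervalIntegral.integral_const, smul_eq_mul, mul_one_div] at this

lemma div_log_pow_le_integral_inv_log_pow_two_27 {m : ℕ} (hm : 3 ≤ m) :
    27 / log 27 ^ m ≤ ∫ t in (2:ℝ)..27, 1 / log t ^ m := by
  have hlog27 : 3.28 ≤ log 27 := by
    have h := one_sub_inv_le_log_of_pos (show (0:ℝ) < 27 / 32 by norm_num)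
    rw [log_div (by norm_num) (by norm_num), show (32:ℝ) = 2 ^ 5 by norm_num, log_pow] at h
    norm_num at h
    linarith [log_two_gt_d9]
  have hlog22 : log 2.2 ≤ 0.8 := by
    have h := log_le_sub_one_of_pos (show (0:ℝ) < 1.1 by norm_num)
    rw [show (2.2:ℝ) = 2 * 1.1 by norm_num, log_mul (by norm_num) (by norm_num)]
    linarith [log_two_lt_d9]
  have hlog27' : log 2.7 ≤ 1 := by
    rw [log_le_iff_le_exp (by norm_num)]
    linarith [exp_one_gt_d9]
  have hsplit : ∫ t in (2:ℝ)..27, 1 / log t ^ m = (∫ t in (2:ℝ)..2.2, 1 / log t ^ m) +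
      (∫ t in (2.2:ℝ)..2.7, 1 / log t ^ m) + ∫ t in (2.7:ℝ)..27, 1 / log t ^ m := by
    rw [integral_add_adjacent_intervals, integral_add_adjacent_intervals] <;>
      exact intervalIntegrable_inv_log_pow m (by norm_num) (by norm_num)
  have hnonneg : 0 ≤ ∫ t in (2.7:ℝ)..27, 1 / log t ^ m :=
    integral_nonneg (by norm_num) fun t ht => by
      have := log_pos (show (1:ℝ) < t by linarith [ht.1])
      positivity
  -- `log t ≤ 1` on `[2, 2.7]`, so `m = 3` is the worst case there
  calc 27 / log 27 ^ m ≤ 27 / 3.28 ^ 3 :=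
        div_le_div_of_nonneg_left (by norm_num) (by norm_num)
          ((pow_le_pow_left₀ (by norm_num) hlog27 3).trans (pow_le_pow_right₀ (by linarith) hm))
    _ ≤ (2.2 - 2) / 0.8 ^ 3 + (2.7 - 2.2) / 1 ^ m := by norm_num
    _ ≤ (2.2 - 2) / 0.8 ^ m + (2.7 - 2.2) / 1 ^ m :=
        add_le_add_left (div_le_div_of_nonneg_left (by norm_num) (by positivity)
          (pow_le_pow_of_le_one (by norm_num) (by norm_num) hm)) _
    _ ≤ (∫ t in (2:ℝ)..2.2, 1 / log t ^ m) + ∫ t in (2.2:ℝ)..2.7, 1 / log t ^ m :=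
        add_le_add (div_pow_le_integral_inv_log_pow m (by norm_num) (by norm_num) hlog22)
          (div_pow_le_integral_inv_log_pow m (by norm_num) (by norm_num) hlog27')
    _ ≤ ∫ t in (2:ℝ)..27, 1 / log t ^ m := by linarith

theorem div_log_pow_le_integral_inv_log_pow {m : ℕ} (hm : 3 ≤ m) {x : ℝ} (hx : 27 ≤ x) :
    x / log x ^ m ≤ ∫ t in (2:ℝ)..x, 1 / log t ^ m := by
  rw [← integral_add_adjacent_intervals (b := 27)
    (intervalIntegrable_inv_log_pow m one_lt_two (by norm_num))
    (intervalIntegrable_inv_log_pow m (by norm_num) (by linarith))]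
  linarith [div_log_pow_le_integral_inv_log_pow_two_27 hm,
    sub_le_integral_inv_log_pow m (by norm_num : (1:ℝ) < 27) hx]

noncomputable def invLogSymm (u : ℝ) : ℝ := 1 / log (1 + u) + 1 / log (1 - u)

lemma invLogSymm_nonneg {u : ℝ} (hu : u ∈ Icc 0 1) : 0 ≤ invLogSymm u := by
  rcases hu.1.eq_or_lt with rfl | hu0
  · simp [invLogSymm]
  rcases hu.2.eq_or_lt with rfl | hu1
  · norm_num [invLogSymm]
    positivity
  have hp : log (1 + u) ≤ u := by linarith [log_le_sub_one_of_pos (show 0 < 1 + u by linarith)]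
  have hm : log (1 - u) ≤ -u := by linarith [log_le_sub_one_of_pos (show 0 < 1 - u by linarith)]
  have h1 : 1 / u ≤ 1 / log (1 + u) := one_div_le_one_div_of_le (log_pos (by linarith)) hp
  have h2 : 1 / -u ≤ 1 / log (1 - u) := one_div_le_one_div_of_neg_of_le (by linarith) hm
  rw [one_div_neg_eq_neg_one_div] at h2
  unfold invLogSymm
  linarith

lemma invLogSymm_le_two {u : ℝ} (hu : u ∈ Ioo 0 1) : invLogSymm u ≤ 2 := by
  obtain ⟨hu0, hu1⟩ := hu
  have hp : u / (1 + u) ≤ log (1 + u) := by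
    convert one_sub_inv_le_log_of_pos (show 0 < 1 + u by linarith) using 1
    field_simp
    ring
  have hm : -u / (1 - u) ≤ log (1 - u) := by
    convert one_sub_inv_le_log_of_pos (show 0 < 1 - u by linarith) using 1
    field_simp
    ring
  have h1 : 1 / log (1 + u) ≤ 1 / (u / (1 + u)) :=
    one_div_le_one_div_of_le (by positivity) hp
  have h2 : 1 / log (1 - u) ≤ 1 / (-u / (1 - u)) :=
    one_div_le_one_div_of_neg_of_le (log_neg (by linarith) (by linarith)) hm
  have hsum : 1 / (u / (1 + u)) + 1 / (-u / (1 - u)) = 2 := by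
    field_simp
    ring
  unfold invLogSymm
  linarith

lemma intervalIntegrable_invLogSymm : IntervalIntegrable invLogSymm volume 0 1 := by
  rw [intervalIntegrable_iff_integrableOn_Ioo_of_le zero_le_one]
  refine Measure.integrableOn_of_bounded (M := 2) (by simp) (by unfold invLogSymm; fun_prop) ?_
  filter_upwards [ae_restrict_mem measurableSet_Ioo] with u hu
  rw [norm_eq_abs, abs_le]
  exact ⟨by linarith [invLogSymm_nonneg (Ioo_subset_Icc_self hu)], invLogSymm_le_two hu⟩

lemma intervalIntegrable_inv_log_zero {b : ℝ} (hb0 : 0 ≤ b) (hb1 : b < 1) :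
    IntervalIntegrable (fun t => 1 / log t) volume 0 b := by
  rw [intervalIntegrable_iff_integrableOn_Ioo_of_le hb0]
  refine Measure.integrableOn_of_bounded (M := 1 / (1 - b)) (by simp)
    (measurable_const.div measurable_log).aestronglyMeasurable ?_
  filter_upwards [ae_restrict_mem measurableSet_Ioo] with t ht
  have hlog : log t ≤ b - 1 := by linarith [log_le_sub_one_of_pos ht.1, ht.2]
  rw [norm_eq_abs, abs_div, abs_one, abs_of_neg (by linarith)]
  exact one_div_le_one_div_of_le (by linarith) (by linarith)

lemma pv_integral_inv_log_eq {x ε : ℝ} (hx : 1 < x) (hε : ε ∈ Ioo 0 1) :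
    (∫ t in (0:ℝ)..(1 - ε), 1 / log t) + ∫ t in (1 + ε)..x, 1 / log t =
      (∫ u in ε..1, invLogSymm u) + ∫ t in (2:ℝ)..x, 1 / log t := by
  obtain ⟨hε0, hε1⟩ := hε
  have hleft : ∫ t in (0:ℝ)..(1 - ε), 1 / log t = ∫ u in ε..1, 1 / log (1 - u) := by
    simpa using (integral_comp_sub_left (fun t => 1 / log t) 1 (a := ε) (b := 1)).symm
  have hright : ∫ t in (1 + ε)..2, 1 / log t = ∫ u in ε..1, 1 / log (1 + u) := by
    rw [integral_comp_add_left (fun t => 1 / log t) 1]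
    norm_num
  have hint_left : IntervalIntegrable (fun u => 1 / log (1 - u)) volume ε 1 := by
    simpa using ((intervalIntegrable_inv_log_zero (by linarith) (by linarith :
      1 - ε < 1)).comp_sub_left 1).symm
  have hint_right : IntervalIntegrable (fun u => 1 / log (1 + u)) volume ε 1 := by
    have h := (intervalIntegrable_inv_log (by linarith : 1 < 1 + ε) one_lt_two).comp_add_left 1
    rwa [add_sub_cancel_left, show (2:ℝ) - 1 = 1 by norm_num] at h
  rw [← integral_add_adjacent_intervals (b := 2) (intervalIntegrable_inv_log (by linarith)
    one_lt_two) (intervalIntegrable_inv_log one_lt_two hx), hleft, hright]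
  simp only [invLogSymm]
  rw [integral_add hint_right hint_left]
  ring

lemma tendsto_pv_integral_inv_log {x : ℝ} (hx : 1 < x) :
    Tendsto (fun ε => (∫ t in (0:ℝ)..(1 - ε), 1 / log t) + ∫ t in (1 + ε)..x, 1 / log t) (𝓝[>] 0)
      (𝓝 ((∫ u in (0:ℝ)..1, invLogSymm u) + ∫ t in (2:ℝ)..x, 1 / log t)) := by
  have hcont : ContinuousWithinAt (fun ε => ∫ u in ε..1, invLogSymm u) (uIcc 0 1) 0 :=
    continuousOn_primitive_interval_left
      ((intervalIntegrable_iff').1 intervalIntegrable_invLogSymm) 0 left_mem_uIcc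
  have hlim : Tendsto (fun ε => ∫ u in ε..1, invLogSymm u) (𝓝[>] 0)
      (𝓝 (∫ u in (0:ℝ)..1, invLogSymm u)) := by
    rw [← nhdsWithin_Ioo_eq_nhdsGT zero_lt_one]
    exact hcont.tendsto.mono_left
      (nhdsWithin_mono _ (Ioo_subset_Icc_self.trans Icc_subset_uIcc))
  refine (hlim.add_const _).congr' ?_
  filter_upwards [Ioo_mem_nhdsGT zero_lt_one] with ε hε
  exact (pv_integral_inv_log_eq hx hε).symm

lemma li_eq {x : ℝ} (hx : 1 < x) :
    li x = (∫ u in (0:ℝ)..1, invLogSymm u) + ∫ t in (2:ℝ)..x, 1 / log t :=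
  (tendsto_pv_integral_inv_log hx).limUnder_eq

lemma integral_inv_log_le_li {x : ℝ} (hx : 1 < x) : ∫ t in (2:ℝ)..x, 1 / log t ≤ li x := by
  rw [li_eq hx, le_add_iff_nonneg_left]
  exact integral_nonneg zero_le_one fun u hu => invLogSymm_nonneg hu

theorem li_ge_sum (n : ℕ) (hn : 0 < n) (x : ℝ) (hx : 27 ≤ x)
    (hA : x / (Real.log x) ^ (n + 2) ≥
      (1 / (Nat.factorial (n + 1) : ℝ)) *
        ∑ k ∈ Finset.Icc 1 (n + 1), 2 * (Nat.factorial (k - 1) : ℝ) / (Real.log 2) ^ k) :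
    li x ≥ ∑ k ∈ Finset.Icc 1 (n + 1), (Nat.factorial (k - 1) : ℝ) * x / (Real.log x) ^ k := by
  have hx1 : (1:ℝ) < x := by linarith
  have hfac : (0:ℝ) < (n + 1)! := by positivity
  have hA' : liAsymptoticSum (n + 1) 2 ≤ (n + 1)! * (x / log x ^ (n + 2)) := by
    rw [ge_iff_le, one_div_mul_eq_div, div_le_iff₀' hfac] at hA
    simpa only [liAsymptoticSum, mul_comm _ (2:ℝ)] using hA
  have hrem := mul_le_mul_of_nonneg_left
    (div_log_pow_le_integral_inv_log_pow (m := n + 2) (by omega) hx) hfac.le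
  calc li x ≥ ∫ t in (2:ℝ)..x, 1 / log t := integral_inv_log_le_li hx1
    _ = liAsymptoticSum (n + 1) x - liAsymptoticSum (n + 1) 2 +
          (n + 1)! * ∫ t in (2:ℝ)..x, 1 / log t ^ (n + 2) :=
        integral_inv_log_eq (n + 1) one_lt_two hx1
    _ ≥ liAsymptoticSum (n + 1) x := by linarith
end

section
/- Suppose that Ramanujan's inequality π(x)² < (e·x/log x)·π(x/e) holds for every real x ≥ x_R (with x_R > e). Then for every positive integer n and every x ≥ e^{n−1}·x_R, we have (e^n/Ξ_n(x))·(x/log x)^{2^n − 1}·π(x/e^n) > π(x)^{2^n}, where Ξ_n(x) = ∏_{k=1}^n (1 − (k−1)/log x)^{2^{n−k}}. -/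
/-!
Induction on `n`. Raising Ramanujan's inequality at `x` to the power `2 ^ n` and bounding
`π(x / e) ^ (2 ^ n)` by the case `n` at `x / e`, where `log (x / e) = log x - 1`, gives the case
`n + 1`. The weights recombine because `(1 - 1 / L) * (1 - (k - 1) / (L - 1)) = 1 - k / L`, that is,
`Ξ_{n+1}(L) = (1 - 1 / L) ^ (2 ^ n - 1) * Ξ_n(L - 1)` as functions of `L = log x`.
-/

noncomputable def primePi (x : ℝ) : ℕ := Nat.primeCounting ⌊x⌋₊

open Real Finset

/-- `Ξ_n` as a function of `L = log x`. -/
noncomputable def hassaniXi (n : ℕ) (L : ℝ) : ℝ :=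
  ∏ k ∈ Icc 1 n, (1 - ((k : ℝ) - 1) / L) ^ (2 ^ (n - k))

lemma hassaniXi_eq_prod_range (n : ℕ) (L : ℝ) :
    hassaniXi n L = ∏ i ∈ range n, (1 - (i : ℝ) / L) ^ (2 ^ (n - 1 - i)) := by
  rw [hassaniXi, ← Ico_add_one_right_eq_Icc, prod_Ico_eq_prod_range, Nat.add_sub_cancel]
  refine prod_congr rfl fun i _ => ?_
  rw [Nat.sub_sub, add_comm 1 i]
  push_cast
  ring_nf

lemma hassaniXi_one (L : ℝ) : hassaniXi 1 L = 1 := by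
  simp [hassaniXi]

lemma sum_range_two_pow_reflect (n : ℕ) : ∑ i ∈ range n, 2 ^ (n - 1 - i) = 2 ^ n - 1 := by
  rw [sum_range_reflect (2 ^ ·) n, Nat.geomSum_eq le_rfl]
  simp

lemma hassaniXi_succ (n : ℕ) {L : ℝ} (hL : L ≠ 0) (hL1 : L - 1 ≠ 0) :
    hassaniXi (n + 1) L = (1 - 1 / L) ^ (2 ^ n - 1) * hassaniXi n (L - 1) := by
  rw [hassaniXi_eq_prod_range, hassaniXi_eq_prod_range, prod_range_succ',
    ← sum_range_two_pow_reflect, ← prod_pow_eq_pow_sum, ← prod_mul_distrib]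
  simp only [Nat.cast_zero, zero_div, sub_zero, one_pow, mul_one]
  refine prod_congr rfl fun i _ => ?_
  rw [← mul_pow, Nat.add_sub_cancel, show n - (i + 1) = n - 1 - i by omega]
  congr 1
  field_simp
  push_cast
  ring

lemma le_of_exp_one_pow_mul_le {xR x : ℝ} {n : ℕ} (hxR : 0 ≤ xR) (hx : exp 1 ^ n * xR ≤ x) :
    xR ≤ x :=
  (le_mul_of_one_le_left hxR (one_le_pow₀ (one_le_exp zero_le_one))).trans hx

lemma exp_one_pow_mul_le_div_exp_one {xR x : ℝ} {n : ℕ} (hx : exp 1 ^ (n + 1) * xR ≤ x) :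
    exp 1 ^ n * xR ≤ x / exp 1 := by
  rwa [le_div_iff₀ (exp_pos 1), mul_right_comm, ← pow_succ]

lemma log_div_exp_one {x : ℝ} (hx : x ≠ 0) : log (x / exp 1) = log x - 1 := by
  rw [log_div hx (exp_pos 1).ne', log_exp]

lemma ramanujan_iterate_identity {c x L Ξ p : ℝ} (m M : ℕ) (hc : c ≠ 0) (hL : L ≠ 0) :
    (c * x / L) ^ (M + 1) * (c ^ m / Ξ * (x / c / (L - 1)) ^ M * p) =
      c ^ (m + 1) / ((1 - 1 / L) ^ M * Ξ) * (x / L) ^ (2 * M + 1) * p := by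
  rw [one_sub_div hL]
  simp only [div_pow, mul_pow, pow_add, pow_mul, pow_one]
  field_simp
  ring

theorem pow_two_pow_lt_of_ramanujan {P : ℝ → ℝ} {xR : ℝ} (hxR : exp 1 < xR)
    (hRam : ∀ x, xR ≤ x → P x ^ 2 < exp 1 * x / log x * P (x / exp 1)) (n : ℕ) {x : ℝ}
    (hx : exp 1 ^ n * xR ≤ x) :
    P x ^ 2 ^ (n + 1) < exp 1 ^ (n + 1) / hassaniXi (n + 1) (log x) *
      (x / log x) ^ (2 ^ (n + 1) - 1) * P (x / exp 1 ^ (n + 1)) := by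
  induction n generalizing x with
  | zero => simpa [hassaniXi_one, mul_div_assoc] using hRam x (by simpa using hx)
  | succ n ih =>
    have hxRx : xR ≤ x := le_of_exp_one_pow_mul_le ((exp_pos 1).trans hxR).le hx
    have hx0 : 0 < x := ((exp_pos 1).trans hxR).trans_le hxRx
    have hL : 1 < log x := (lt_log_iff_exp_lt hx0).2 (hxR.trans_le hxRx)
    have hIH := ih (exp_one_pow_mul_le_div_exp_one hx)
    rw [log_div_exp_one hx0.ne', div_div x (exp 1) (exp 1 ^ (n + 1)), ← pow_succ'] at hIH
    obtain ⟨M, hM⟩ := Nat.exists_eq_add_one_of_ne_zero (Nat.two_pow_pos (n + 1)).ne'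
    have hM2 : 2 ^ (n + 1 + 1) - 1 = 2 * M + 1 := by rw [pow_succ, hM]; omega
    calc P x ^ 2 ^ (n + 1 + 1) = (P x ^ 2) ^ 2 ^ (n + 1) := by
          rw [← pow_mul, pow_succ 2 (n + 1), mul_comm]
      _ < (exp 1 * x / log x * P (x / exp 1)) ^ 2 ^ (n + 1) :=
          pow_lt_pow_left₀ (hRam x hxRx) (sq_nonneg _) (Nat.two_pow_pos _).ne'
      _ = (exp 1 * x / log x) ^ 2 ^ (n + 1) * P (x / exp 1) ^ 2 ^ (n + 1) := mul_pow _ _ _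
      _ < _ := mul_lt_mul_of_pos_left hIH
          (pow_pos (div_pos (mul_pos (exp_pos 1) hx0) (by linarith)) _)
      _ = _ := by
          rw [hassaniXi_succ _ (L := log x) (by linarith) (by linarith), hM2, hM,
            Nat.add_sub_cancel]
          exact ramanujan_iterate_identity _ _ (exp_pos 1).ne' (by linarith)

theorem hassani_generalization (xR : ℝ) (hxR : Real.exp 1 < xR)
    (hRam : ∀ x : ℝ, xR ≤ x →
      (primePi x : ℝ) ^ 2 < (Real.exp 1 * x / Real.log x) * primePi (x / Real.exp 1))
    (n : ℕ) (hn : 0 < n) (x : ℝ) (hx : Real.exp 1 ^ (n - 1) * xR ≤ x) :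
    (Real.exp 1 ^ n /
          ∏ k ∈ Finset.Icc 1 n, (1 - ((k : ℝ) - 1) / Real.log x) ^ (2 ^ (n - k))) *
        (x / Real.log x) ^ (2 ^ n - 1) * (primePi (x / Real.exp 1 ^ n) : ℝ) >
      (primePi x : ℝ) ^ (2 ^ n) := by
  obtain ⟨m, rfl⟩ := Nat.exists_eq_add_one_of_ne_zero hn.ne'
  rw [Nat.add_sub_cancel] at hx
  exact pow_two_pow_lt_of_ramanujan hxR hRam m hx
end
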